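/- arXiv:1101.4536 — 3 statements merged into one kernel-verified Lean document; each statement's English description precedes it below -/
import Mathlib

section
/- Let N = {1,…,n} be a finite set of players and η a characteristic function assigning a real value η_S to each nonempty coalition S ⊆ N. If the core C(η) is nonempty, then there exists a constant μ > 0 such that for all x ∈ R^n, dist²(x, C(η)) ≤ μ · Σ_{i=1}^n dist²(x, X_i(η)). -/
/-!
The core is the polyhedron `{x | ∀ s, b s ≤ ⟪a s, x⟫}` cut out by the coalition constraints, and
each of these constraints is also one of the constraints of some bounding set `X i` (take `i ∈ S`).
Hoffman's error bound `dist(x, C) ≤ κ ∑ s, (b s - ⟪a s, x⟫)⁺` then finishes the proof, since each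
residual is at most `‖a s‖ · dist(x, X i)`.

Hoffman's bound: let `y` be the projection of `x` onto `C`. Then `x - y` lies in the cone spanned
by the outward normals `-a s` of the constraints active at `y` (Farkas), hence, by the conic
Carathéodory theorem, in the cone of a linearly independent subfamily. Its coefficients are then
`O(‖x - y‖)`, and pairing `x - y` with this representation gives
`‖x - y‖² = ∑ m s (b s - ⟪a s, x⟫) ≤ O(‖x - y‖) · ∑ s, (b s - ⟪a s, x⟫)⁺`.
-/

open Metric Finset Topology
open scoped RealInnerProductSpace

section ConicHull

variable {𝕜 M ι : Type*} [Field 𝕜] [LinearOrder 𝕜] [IsStrictOrderedRing 𝕜]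
  [AddCommGroup M] [Module 𝕜 M]

variable (𝕜) in
def conicHull (v : ι → M) (A : Finset ι) : PointedCone 𝕜 M :=
  .ofConeComb {z | ∃ l : ι → 𝕜, (∀ s ∈ A, 0 ≤ l s) ∧ ∑ s ∈ A, l s • v s = z}
    ⟨0, 0, by simp, by simp⟩ <| by
      rintro _ ⟨l, hl, rfl⟩ _ ⟨l', hl', rfl⟩ c hc c' hc'
      refine ⟨c • l + c' • l', fun s hs => ?_, ?_⟩
      · have := hl s hs
        have := hl' s hs
        simp only [Pi.add_apply, Pi.smul_apply, smul_eq_mul]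
        positivity
      · simp [Finset.smul_sum, add_smul, mul_smul, Finset.sum_add_distrib]

variable {v : ι → M} {A B : Finset ι} {z : M}

theorem conicHull_mono (h : B ⊆ A) : conicHull 𝕜 v B ≤ conicHull 𝕜 v A := by
  classical
  rintro _ ⟨l, hl, rfl⟩
  refine ⟨fun s => if s ∈ B then l s else 0, fun s _ => ?_, ?_⟩
  · dsimp only
    split_ifs with hs
    exacts [hl s hs, le_rfl]
  · rw [← Finset.sum_subset h (fun s _ hs => by simp [hs])]
    exact Finset.sum_congr rfl fun s hs => by simp [hs]

theorem mem_conicHull_of_mem {s : ι} (hs : s ∈ A) : v s ∈ conicHull 𝕜 v A := by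
  classical
  exact ⟨Pi.single s 1, fun t _ => by by_cases h : t = s <;> simp [h],
    by simp [Pi.single_apply, hs]⟩

theorem exists_linearIndepOn_of_mem_conicHull (hz : z ∈ conicHull 𝕜 v A) :
    ∃ B ⊆ A, LinearIndepOn 𝕜 v B ∧ z ∈ conicHull 𝕜 v B := by
  classical
  induction A using Finset.strongInduction with
  | H A ih =>
  by_cases hA : LinearIndepOn 𝕜 v (A : Set ι)
  · exact ⟨A, subset_rfl, hA, hz⟩
  obtain ⟨l, hl, rfl⟩ := hz
  obtain ⟨g, hg, i, hiA, hgi⟩ := not_linearIndepOn_finset_iff.mp hA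
  wlog hpos : 0 < g i generalizing g
  · exact this (-g) (by simp [neg_smul, hg]) (by simpa using hgi)
      (by simpa using lt_of_le_of_ne (not_lt.mp hpos) hgi)
  obtain ⟨s₀, hs₀, hmin⟩ := (A.filter (0 < g ·)).exists_min_image (fun s => l s / g s)
    ⟨i, by simp [hiA, hpos]⟩
  rw [Finset.mem_filter] at hs₀
  set t := l s₀ / g s₀
  have ht : 0 ≤ t := div_nonneg (hl s₀ hs₀.1) hs₀.2.le
  -- Subtracting `t • g` keeps the coefficients nonnegative and kills the one at `s₀`.
  have hl' : ∀ s ∈ A, 0 ≤ l s - t * g s := by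
    intro s hs
    rcases le_or_gt (g s) 0 with hgs | hgs
    · nlinarith [hl s hs]
    · have := hmin s (by simp [hs, hgs])
      rw [le_div_iff₀ hgs] at this
      linarith
  have hsum : ∑ s ∈ A.erase s₀, (l s - t * g s) • v s = ∑ s ∈ A, l s • v s := by
    rw [Finset.sum_erase _ (by simp [t, div_mul_cancel₀ _ hs₀.2.ne'])]
    simp [sub_smul, mul_smul, Finset.sum_sub_distrib, ← Finset.smul_sum, hg]
  obtain ⟨B, hB, hBind, hzB⟩ := ih _ (Finset.erase_ssubset hs₀.1)
    ⟨_, fun s hs => hl' s (Finset.mem_of_mem_erase hs), hsum⟩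
  exact ⟨B, hB.trans (Finset.erase_subset _ _), hBind, hzB⟩

theorem coe_conicHull_eq_image :
    (conicHull 𝕜 v A : Set M) =
      Fintype.linearCombination 𝕜 (fun s : A => v s) '' Set.Ici 0 := by
  classical
  ext z
  constructor
  · rintro ⟨l, hl, rfl⟩
    refine ⟨fun s => l s, fun s => hl s s.2, ?_⟩
    rw [Fintype.linearCombination_apply]
    exact Finset.sum_coe_sort A (fun s => l s • v s)
  · rintro ⟨m, hm, rfl⟩
    refine ⟨fun s => if h : s ∈ A then m ⟨s, h⟩ else 0,
      fun s hs => by simpa [hs] using hm ⟨s, hs⟩, ?_⟩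
    rw [Fintype.linearCombination_apply, ← Finset.sum_coe_sort A]
    simp

end ConicHull

section Topology

variable {E ι : Type*} [AddCommGroup E] [Module ℝ E] [TopologicalSpace E]
  [IsTopologicalAddGroup E] [ContinuousSMul ℝ E] [T2Space E]

theorem isClosed_conicHull_of_linearIndepOn {v : ι → E} {A : Finset ι}
    (h : LinearIndepOn ℝ v (A : Set ι)) : IsClosed (conicHull ℝ v A : Set E) := by
  rw [coe_conicHull_eq_image]
  have hinj : LinearMap.ker (Fintype.linearCombination ℝ (fun s : A => v s)) = ⊥ :=
    LinearMap.ker_eq_bot.mpr h.fintypeLinearCombination_injective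
  exact (LinearMap.isClosedEmbedding_of_injective hinj).isClosedMap _ isClosed_Ici

theorem isClosed_conicHull (v : ι → E) (A : Finset ι) :
    IsClosed (conicHull ℝ v A : Set E) := by
  set 𝓑 := {B : Finset ι | B ⊆ A ∧ LinearIndepOn ℝ v (B : Set ι)}
  have h𝓑 : 𝓑.Finite := A.powerset.finite_toSet.subset fun B hB => Finset.mem_powerset.mpr hB.1
  have : (conicHull ℝ v A : Set E) = ⋃ B ∈ 𝓑, conicHull ℝ v B := by
    ext z
    simp only [Set.mem_iUnion, SetLike.mem_coe, exists_prop]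
    constructor
    · intro hz
      obtain ⟨B, hBA, hB, hzB⟩ := exists_linearIndepOn_of_mem_conicHull hz
      exact ⟨B, ⟨hBA, hB⟩, hzB⟩
    · rintro ⟨B, ⟨hBA, -⟩, hzB⟩
      exact conicHull_mono hBA hzB
  rw [this]
  exact h𝓑.isClosed_biUnion fun B hB => isClosed_conicHull_of_linearIndepOn hB.2

end Topology

section Normed

variable {E ι : Type*} [NormedAddCommGroup E] [NormedSpace ℝ E]

theorem exists_sum_le_mul_norm_of_linearIndepOn {v : ι → E} {A : Finset ι}
    (h : LinearIndepOn ℝ v (A : Set ι)) :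
    ∃ C ≥ 0, ∀ l : ι → ℝ, ∑ s ∈ A, l s ≤ C * ‖∑ s ∈ A, l s • v s‖ := by
  set T := Fintype.linearCombination ℝ (fun s : A => v s)
  obtain ⟨K, -, hK⟩ := T.exists_antilipschitzWith
    (LinearMap.ker_eq_bot.mpr h.fintypeLinearCombination_injective)
  refine ⟨A.card * K, by positivity, fun l => ?_⟩
  set m : A → ℝ := fun s => l s
  calc ∑ s ∈ A, l s = ∑ s : A, m s := (Finset.sum_coe_sort A l).symm
    _ ≤ ∑ _s : A, ‖m‖ :=
        Finset.sum_le_sum fun s _ => (le_abs_self _).trans (norm_le_pi_norm m s)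
    _ = A.card * ‖m‖ := by simp
    _ ≤ A.card * (K * ‖T m‖) := by gcongr; exact hK.le_mul_norm (map_zero T) m
    _ = A.card * K * ‖∑ s ∈ A, l s • v s‖ := by
      rw [mul_assoc, Fintype.linearCombination_apply, Finset.sum_coe_sort A (fun s => l s • v s)]

theorem exists_uniform_sum_le_mul_norm [Finite ι] (v : ι → E) :
    ∃ C ≥ 0, ∀ A : Finset ι, LinearIndepOn ℝ v (A : Set ι) →
      ∀ l : ι → ℝ, ∑ s ∈ A, l s ≤ C * ‖∑ s ∈ A, l s • v s‖ := by
  have : ∀ A : Finset ι, ∃ C ≥ 0, LinearIndepOn ℝ v (A : Set ι) →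
      ∀ l : ι → ℝ, ∑ s ∈ A, l s ≤ C * ‖∑ s ∈ A, l s • v s‖ := by
    intro A
    by_cases h : LinearIndepOn ℝ v (A : Set ι)
    · obtain ⟨C, hC, hb⟩ := exists_sum_le_mul_norm_of_linearIndepOn h
      exact ⟨C, hC, fun _ => hb⟩
    · exact ⟨0, le_rfl, fun h' => absurd h' h⟩
  choose C hC0 hC using this
  obtain ⟨D, hD⟩ := (Set.finite_range C).bddAbove
  have hCD : ∀ A, C A ≤ D := fun A => hD ⟨A, rfl⟩
  refine ⟨D, (hC0 ∅).trans (hCD ∅), fun A hA l => (hC A hA l).trans ?_⟩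
  gcongr
  exact hCD A

end Normed

section Polyhedron

variable {E ι : Type*} [NormedAddCommGroup E] [InnerProductSpace ℝ E]

def polyhedron (a : ι → E) (b : ι → ℝ) : Set E := {x | ∀ s, b s ≤ ⟪a s, x⟫}

theorem isClosed_polyhedron (a : ι → E) (b : ι → ℝ) : IsClosed (polyhedron a b) := by
  simp only [polyhedron, Set.ofPred_forall]
  exact isClosed_iInter fun s =>
    isClosed_le continuous_const (continuous_const.inner continuous_id)

theorem convex_polyhedron (a : ι → E) (b : ι → ℝ) : Convex ℝ (polyhedron a b) := by
  simp only [polyhedron, Set.ofPred_forall]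
  exact convex_iInter fun s => convex_halfSpace_ge (innerₗ E (a s)).isLinear (b s)

theorem max_sub_inner_le_norm_mul_infDist {X : Set E} (hX : X.Nonempty) {a : E} {b : ℝ}
    (hXH : X ⊆ {z | b ≤ ⟪a, z⟫}) (x : E) : max (b - ⟪a, x⟫) 0 ≤ ‖a‖ * infDist x X := by
  refine max_le ?_ (mul_nonneg (norm_nonneg _) infDist_nonneg)
  have := hX.to_subtype
  rw [infDist_eq_iInf, Real.mul_iInf_of_nonneg (norm_nonneg _)]
  refine le_ciInf fun ⟨z, hz⟩ => ?_
  have hbz : b ≤ ⟪a, z⟫ := hXH hz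
  calc b - ⟪a, x⟫ ≤ ⟪a, z - x⟫ := by rw [inner_sub_right]; linarith
    _ ≤ ‖a‖ * ‖z - x‖ := real_inner_le_norm _ _
    _ = ‖a‖ * dist x z := by rw [dist_comm, dist_eq_norm]

variable [Fintype ι] {a : ι → E} {b : ι → ℝ} {x y d : E}

noncomputable def activeSet (a : ι → E) (b : ι → ℝ) (y : E) : Finset ι :=
  {s | ⟪a s, y⟫ = b s}

theorem exists_pos_add_smul_mem_polyhedron (hy : y ∈ polyhedron a b)
    (hd : ∀ s ∈ activeSet a b y, 0 ≤ ⟪a s, d⟫) :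
    ∃ t : ℝ, 0 < t ∧ y + t • d ∈ polyhedron a b := by
  have : ∀ s, ∀ᶠ t in 𝓝[>] (0 : ℝ), b s ≤ ⟪a s, y + t • d⟫ := by
    intro s
    by_cases hs : s ∈ activeSet a b y
    · filter_upwards [self_mem_nhdsWithin] with t (ht : 0 < t)
      rw [inner_add_right, real_inner_smul_right]
      have : ⟪a s, y⟫ = b s := by simpa [activeSet] using hs
      nlinarith [hd s hs]
    · have hlt : b s < ⟪a s, y + (0 : ℝ) • d⟫ := by
        simpa [activeSet, (hy s).lt_iff_ne, eq_comm] using hs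
      have hcont : Continuous fun t : ℝ => ⟪a s, y + t • d⟫ := by fun_prop
      exact nhdsWithin_le_nhds ((continuousAt_const.eventually_lt hcont.continuousAt hlt).mono
        fun t ht => ht.le)
  obtain ⟨t, ht, htpos⟩ := ((Filter.eventually_all.mpr this).and self_mem_nhdsWithin).exists
  exact ⟨t, htpos, ht⟩

theorem sub_mem_conicHull_activeSet [CompleteSpace E] (hy : y ∈ polyhedron a b)
    (hproj : ∀ w ∈ polyhedron a b, ⟪x - y, w - y⟫ ≤ 0) :
    x - y ∈ conicHull ℝ (-a) (activeSet a b y) := by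
  by_contra hxy
  let K : ProperCone ℝ E :=
    { toSubmodule := conicHull ℝ (-a) (activeSet a b y), isClosed' := isClosed_conicHull _ _ }
  obtain ⟨d, hdK, hxd⟩ := ProperCone.hyperplane_separation' K hxy
  have hfeas : ∀ s ∈ activeSet a b y, 0 ≤ ⟪a s, -d⟫ := fun s hs => by
    simpa using hdK _ (mem_conicHull_of_mem (𝕜 := ℝ) (v := -a) hs)
  obtain ⟨t, ht, hw⟩ := exists_pos_add_smul_mem_polyhedron hy hfeas
  have := hproj _ hw
  rw [add_sub_cancel_left, real_inner_smul_right, inner_neg_right] at this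
  nlinarith

theorem exists_infDist_polyhedron_le [CompleteSpace E] (hne : (polyhedron a b).Nonempty) :
    ∃ κ ≥ 0, ∀ x, infDist x (polyhedron a b) ≤ κ * ∑ s, max (b s - ⟪a s, x⟫) 0 := by
  obtain ⟨κ, hκ, hbound⟩ := exists_uniform_sum_le_mul_norm (-a)
  refine ⟨κ, hκ, fun x => ?_⟩
  obtain ⟨y, hy, hxy⟩ := exists_norm_eq_iInf_of_complete_convex hne
    (isClosed_polyhedron a b).isComplete (convex_polyhedron a b) x
  have hdist : infDist x (polyhedron a b) = ‖x - y‖ := by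
    simp only [infDist_eq_iInf, hxy, dist_eq_norm]
  have hproj := (norm_eq_iInf_iff_real_inner_le_zero (convex_polyhedron a b) hy).mp hxy
  obtain ⟨B, hBA, hB, m, hm, hmxy⟩ :=
    exists_linearIndepOn_of_mem_conicHull (sub_mem_conicHull_activeSet hy hproj)
  set R := ∑ s, max (b s - ⟪a s, x⟫) 0
  have hR : ∀ s, b s - ⟪a s, x⟫ ≤ R := fun s =>
    (le_max_left _ _).trans <| Finset.single_le_sum (f := fun s => max (b s - ⟪a s, x⟫) 0)
      (fun _ _ => le_max_right _ _) (Finset.mem_univ s)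
  -- On active constraints `⟪a s, y⟫ = b s`, so pairing `x - y` with its conic representation
  -- expresses `‖x - y‖²` through the residuals at `x`.
  have hsq : ‖x - y‖ ^ 2 = ∑ s ∈ B, m s * (b s - ⟪a s, x⟫) := by
    rw [← real_inner_self_eq_norm_sq]
    nth_rw 2 [← hmxy]
    rw [inner_sum]
    refine Finset.sum_congr rfl fun s hs => ?_
    have hact : ⟪a s, y⟫ = b s := by simpa [activeSet] using hBA hs
    simp only [real_inner_smul_right, Pi.neg_apply, inner_neg_right, real_inner_comm (a s),
      inner_sub_left, hact]
    ring
  have : ‖x - y‖ ^ 2 ≤ κ * ‖x - y‖ * R := calc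
    ‖x - y‖ ^ 2 ≤ ∑ s ∈ B, m s * R := hsq.trans_le <|
        Finset.sum_le_sum fun s hs => mul_le_mul_of_nonneg_left (hR s) (hm s hs)
    _ = (∑ s ∈ B, m s) * R := Finset.sum_mul _ _ _ |>.symm
    _ ≤ κ * ‖x - y‖ * R := by
        gcongr
        exact hmxy ▸ hbound B hB m
  rw [hdist]
  rcases (norm_nonneg (x - y)).eq_or_lt with h | h
  · rw [← h]; positivity
  · nlinarith

theorem exists_sq_infDist_polyhedron_le_mul_sum [CompleteSpace E] {J : Type*} [Fintype J]
    (hne : (polyhedron a b).Nonempty) (X : J → Set E) (hX : ∀ j, (X j).Nonempty)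
    (π : ι → J) (hπ : ∀ s, X (π s) ⊆ {z | b s ≤ ⟪a s, z⟫}) :
    ∃ μ > 0, ∀ x, infDist x (polyhedron a b) ^ 2 ≤ μ * ∑ j, infDist x (X j) ^ 2 := by
  obtain ⟨κ, hκ, hP⟩ := exists_infDist_polyhedron_le hne
  set c := ∑ s, ‖a s‖
  refine ⟨κ ^ 2 * c ^ 2 + 1, by positivity, fun x => ?_⟩
  set T := ∑ j, infDist x (X j) ^ 2
  have hT : 0 ≤ T := by positivity
  have hXT : ∀ j, infDist x (X j) ≤ √T := fun j =>
    Real.le_sqrt_of_sq_le <| Finset.single_le_sum (f := fun j => infDist x (X j) ^ 2)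
      (fun _ _ => sq_nonneg _) (Finset.mem_univ j)
  have : infDist x (polyhedron a b) ≤ κ * (c * √T) := calc
    _ ≤ κ * ∑ s, max (b s - ⟪a s, x⟫) 0 := hP x
    _ ≤ κ * ∑ s, ‖a s‖ * √T := by
        gcongr with s
        exact (max_sub_inner_le_norm_mul_infDist (hX _) (hπ s) x).trans <|
          mul_le_mul_of_nonneg_left (hXT _) (norm_nonneg _)
    _ = κ * (c * √T) := by rw [Finset.sum_mul]
  calc infDist x (polyhedron a b) ^ 2 ≤ (κ * (c * √T)) ^ 2 := by gcongr; exact infDist_nonneg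
    _ = κ ^ 2 * c ^ 2 * T := by rw [mul_pow, mul_pow, Real.sq_sqrt hT, mul_assoc]
    _ ≤ (κ ^ 2 * c ^ 2 + 1) * T := by nlinarith

end Polyhedron

section Game

variable {n : ℕ}

def gameCore (η : Finset (Fin n) → ℝ) : Set (EuclideanSpace ℝ (Fin n)) :=
  {x | (∑ j, x j) = η Finset.univ ∧
    ∀ S : Finset (Fin n), S.Nonempty → S ⊂ Finset.univ → η S ≤ ∑ j ∈ S, x j}

def boundingSet (η : Finset (Fin n) → ℝ) (i : Fin n) : Set (EuclideanSpace ℝ (Fin n)) :=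
  {x | (∑ j, x j) = η Finset.univ ∧
    ∀ S : Finset (Fin n), S ⊂ Finset.univ → i ∈ S → η S ≤ ∑ j ∈ S, x j}

theorem gameCore_subset_boundingSet (η : Finset (Fin n) → ℝ) (i : Fin n) :
    gameCore η ⊆ boundingSet η i :=
  fun _ hx => ⟨hx.1, fun S hS hi => hx.2 S ⟨i, hi⟩ hS⟩

noncomputable def coalitionVector (S : Finset (Fin n)) : EuclideanSpace ℝ (Fin n) :=
  ∑ j ∈ S, EuclideanSpace.single j 1

@[simp]
theorem inner_coalitionVector (S : Finset (Fin n)) (x : EuclideanSpace ℝ (Fin n)) :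
    ⟪coalitionVector S, x⟫ = ∑ j ∈ S, x j := by
  simp [coalitionVector, sum_inner, EuclideanSpace.inner_single_left]

/-- The core as a polyhedron: one constraint per proper nonempty coalition, and the efficiency
equation `x(N) = η N` split into two opposite inequalities. -/
abbrev CoreConstraint (n : ℕ) := {S : Finset (Fin n) // S.Nonempty ∧ S ⊂ Finset.univ} ⊕ Bool

noncomputable def coreNormal : CoreConstraint n → EuclideanSpace ℝ (Fin n)
  | .inl S => coalitionVector S.1
  | .inr true => coalitionVector Finset.univ
  | .inr false => -coalitionVector Finset.univ

def coreBound (η : Finset (Fin n) → ℝ) : CoreConstraint n → ℝ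
  | .inl S => η S.1
  | .inr true => η Finset.univ
  | .inr false => -η Finset.univ

theorem gameCore_eq_polyhedron (η : Finset (Fin n) → ℝ) :
    gameCore η = polyhedron coreNormal (coreBound η) := by
  ext x
  simp only [gameCore, polyhedron, Set.mem_ofPred_eq, Sum.forall, Bool.forall_bool,
    Subtype.forall, coreNormal, coreBound, inner_coalitionVector, inner_neg_left, neg_le_neg_iff]
  constructor
  · rintro ⟨hsum, hS⟩
    exact ⟨fun S hS' => hS S hS'.1 hS'.2, hsum.le, hsum.ge⟩
  · rintro ⟨hS, hle, hge⟩
    exact ⟨le_antisymm hle hge, fun S h₁ h₂ => hS S ⟨h₁, h₂⟩⟩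

theorem exists_boundingSet_subset (η : Finset (Fin n) → ℝ) (hn : 0 < n)
    (s : CoreConstraint n) :
    ∃ i, boundingSet η i ⊆ {x | coreBound η s ≤ ⟪coreNormal s, x⟫} := by
  rcases s with ⟨S, ⟨i, hi⟩, hS⟩ | _ | _
  · exact ⟨i, fun x hx => by simpa [coreNormal, coreBound] using hx.2 S hS hi⟩
  · exact ⟨⟨0, hn⟩, fun x hx => by simp [coreNormal, coreBound, hx.1]⟩
  · exact ⟨⟨0, hn⟩, fun x hx => by simp [coreNormal, coreBound, hx.1]⟩

end Game

/-- If the core of a TU game is nonempty, there is `μ > 0` with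
`dist²(x, C(η)) ≤ μ ∑ᵢ dist²(x, Xᵢ(η))` for all `x`. -/
theorem stmt2 {n : ℕ} (η : Finset (Fin n) → ℝ)
    (core : Set (EuclideanSpace ℝ (Fin n)))
    (hcore : core = {x | (∑ j, x j) = η Finset.univ ∧
      ∀ S : Finset (Fin n), S.Nonempty → S ⊂ Finset.univ → η S ≤ ∑ j ∈ S, x j})
    (Xb : Fin n → Set (EuclideanSpace ℝ (Fin n)))
    (hXb : ∀ i, Xb i = {x | (∑ j, x j) = η Finset.univ ∧
      ∀ S : Finset (Fin n), S ⊂ Finset.univ → i ∈ S → η S ≤ ∑ j ∈ S, x j})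
    (hne : core.Nonempty) :
    ∃ μ > (0 : ℝ), ∀ x : EuclideanSpace ℝ (Fin n),
      infDist x core ^ 2 ≤ μ * ∑ i, infDist x (Xb i) ^ 2 := by
  obtain rfl : core = gameCore η := hcore
  obtain rfl : Xb = boundingSet η := funext hXb
  rcases n.eq_zero_or_pos with rfl | hn
  · obtain ⟨z, hz⟩ := hne
    exact ⟨1, one_pos, fun x => by simp [Subsingleton.elim x z, infDist_zero_of_mem hz]⟩
  have hX i : (boundingSet η i).Nonempty := hne.mono (gameCore_subset_boundingSet η i)
  choose π hπ using exists_boundingSet_subset η hn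
  rw [gameCore_eq_polyhedron] at hne ⊢
  exact exists_sq_infDist_polyhedron_le_mul_sum hne _ hX π hπ
end

section
/- Let X_i(t) ⊆ R^n (for i = 1,…,n and t ≥ 0) be nonempty closed convex sets each containing a nonempty set C ⊆ R^n, let A(t) be n×n doubly stochastic matrices, and define iteratively x^i(t+1) = P_{X_i(t)}[w^i(t)] with w^i(t) = Σ_j a_{ij}(t) x^j(t) and errors e^i(t) = x^i(t+1) − w^i(t). Then for every x ∈ C and all t ≥ 0: Σ_{i=1}^n ‖x^i(t+1) − x‖² ≤ Σ_{i=1}^n ‖x^i(t) − x‖² − Σ_{i=1}^n ‖e^i(t)‖². -/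
/-!
Each agent's new point is the projection of an average of the old points onto a convex set
containing `z`, so it is closer to `z` than the average by at least the length of the
projection step: `‖xⁱ(t+1) - z‖² ≤ ‖wⁱ(t) - z‖² - ‖eⁱ(t)‖²`. By Jensen's inequality for the
convex function `‖· - z‖²`, each `‖wⁱ(t) - z‖²` is at most the `A(t)`-weighted average of the
`‖xʲ(t) - z‖²`, and summing over `i` these averages add up to `∑ⱼ ‖xʲ(t) - z‖²` because the
columns of `A(t)` also sum to one.
-/

open Finset Matrix

section Projection

variable {F : Type*} [NormedAddCommGroup F] [InnerProductSpace ℝ F]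

theorem Convex.norm_sub_sq_le_of_forall_norm_sub_le {K : Set F} (hK : Convex ℝ K)
    {u p z : F} (hp : p ∈ K) (hz : z ∈ K) (hmin : ∀ y ∈ K, ‖u - p‖ ≤ ‖u - y‖) :
    ‖p - z‖ ^ 2 ≤ ‖u - z‖ ^ 2 - ‖u - p‖ ^ 2 := by
  have : Nonempty K := ⟨⟨p, hp⟩⟩
  have hinf : ‖u - p‖ = ⨅ y : K, ‖u - y‖ :=
    le_antisymm (le_ciInf fun y => hmin y y.2)
      (ciInf_le (f := fun y : K => ‖u - y‖)
        ⟨0, by rintro _ ⟨y, rfl⟩; exact norm_nonneg _⟩ ⟨p, hp⟩)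
  have hangle : inner ℝ (u - p) (z - p) ≤ 0 :=
    (norm_eq_iInf_iff_real_inner_le_zero hK hp).1 hinf z hz
  have hsplit : u - z = (u - p) + (p - z) := by abel
  have hflip : inner ℝ (u - p) (p - z) = -inner ℝ (u - p) (z - p) := by
    rw [← inner_neg_right, neg_sub]
  rw [hsplit, norm_add_sq_real, hflip]
  linarith

end Projection

section DoublyStochastic

variable {ι E : Type*} [Fintype ι] [DecidableEq ι] [AddCommGroup E] [Module ℝ E]

theorem ConvexOn.sum_map_sum_smul_le_of_mem_doublyStochastic {s : Set E} {f : E → ℝ}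
    (hf : ConvexOn ℝ s f) {A : Matrix ι ι ℝ} (hA : A ∈ doublyStochastic ℝ ι) {v : ι → E}
    (hv : ∀ j, v j ∈ s) :
    ∑ i, f (∑ j, A i j • v j) ≤ ∑ j, f (v j) :=
  calc ∑ i, f (∑ j, A i j • v j)
      ≤ ∑ i, ∑ j, A i j * f (v j) :=
        sum_le_sum fun i _ => hf.map_sum_le (fun _ _ => nonneg_of_mem_doublyStochastic hA)
          (sum_row_of_mem_doublyStochastic hA i) fun j _ => hv j
    _ = ∑ j, f (v j) := by
        rw [sum_comm]
        simp only [← sum_mul, sum_col_of_mem_doublyStochastic hA, one_mul]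

end DoublyStochastic

theorem convexOn_univ_norm_sq {E : Type*} [NormedAddCommGroup E] [NormedSpace ℝ E] :
    ConvexOn ℝ Set.univ fun v : E => ‖v‖ ^ 2 :=
  convexOn_univ_norm.pow (fun _ _ => norm_nonneg _) 2

theorem stmt8_general {n : ℕ} (X : ℕ → Fin n → Set (EuclideanSpace ℝ (Fin n)))
    (C : Set (EuclideanSpace ℝ (Fin n)))
    (hXcv : ∀ t i, Convex ℝ (X t i)) (hCX : ∀ t i, C ⊆ X t i)
    (A : ℕ → Matrix (Fin n) (Fin n) ℝ)
    (hnonneg : ∀ t i j, 0 ≤ A t i j)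
    (hrow : ∀ t i, ∑ j, A t i j = 1)
    (hcol : ∀ t j, ∑ i, A t i j = 1)
    (x : ℕ → Fin n → EuclideanSpace ℝ (Fin n))
    (w : ℕ → Fin n → EuclideanSpace ℝ (Fin n))
    (hw : ∀ t i, w t i = ∑ j, A t i j • x t j)
    (hproj : ∀ t i, x (t + 1) i ∈ X t i ∧
      ∀ y ∈ X t i, ‖w t i - x (t + 1) i‖ ≤ ‖w t i - y‖)
    (e : ℕ → Fin n → EuclideanSpace ℝ (Fin n))
    (he : ∀ t i, e t i = x (t + 1) i - w t i)
    (z : EuclideanSpace ℝ (Fin n)) (hz : z ∈ C) (t : ℕ) :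
    ∑ i, ‖x (t + 1) i - z‖ ^ 2 ≤
      ∑ i, ‖x t i - z‖ ^ 2 - ∑ i, ‖e t i‖ ^ 2 := by
  have hA : A t ∈ doublyStochastic ℝ (Fin n) :=
    mem_doublyStochastic_iff_sum.2 ⟨hnonneg t, hrow t, hcol t⟩
  have hstep i : ‖x (t + 1) i - z‖ ^ 2 ≤ ‖w t i - z‖ ^ 2 - ‖e t i‖ ^ 2 := by
    rw [he t i, norm_sub_rev (x (t + 1) i) (w t i)]
    exact (hXcv t i).norm_sub_sq_le_of_forall_norm_sub_le (hproj t i).1 (hCX t i hz)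
      (hproj t i).2
  have haverage i : w t i - z = ∑ j, A t i j • (x t j - z) := by
    simp only [hw, smul_sub, sum_sub_distrib, ← sum_smul, hrow, one_smul]
  have hjensen : ∑ i, ‖w t i - z‖ ^ 2 ≤ ∑ j, ‖x t j - z‖ ^ 2 := by
    simp only [haverage]
    exact convexOn_univ_norm_sq.sum_map_sum_smul_le_of_mem_doublyStochastic hA
      fun _ => Set.mem_univ _
  calc ∑ i, ‖x (t + 1) i - z‖ ^ 2
      ≤ ∑ i, (‖w t i - z‖ ^ 2 - ‖e t i‖ ^ 2) := sum_le_sum fun i _ => hstep i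
    _ = ∑ i, ‖w t i - z‖ ^ 2 - ∑ i, ‖e t i‖ ^ 2 := sum_sub_distrib _ _
    _ ≤ ∑ i, ‖x t i - z‖ ^ 2 - ∑ i, ‖e t i‖ ^ 2 := by linarith

/-- One step of the projection-based bargaining protocol: if each `X t i` is a
nonempty closed convex set containing a common set `C`, each `A t` is doubly
stochastic, and `x (t+1) i` is the projection of `wⁱ(t) = ∑ⱼ aᵢⱼ(t) xʲ(t)`
onto `X t i`, then for every `z ∈ C` and all `t`,
`∑ᵢ ‖xⁱ(t+1) − z‖² ≤ ∑ᵢ ‖xⁱ(t) − z‖² − ∑ᵢ ‖eⁱ(t)‖²`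
where `eⁱ(t) = xⁱ(t+1) − wⁱ(t)`. -/
theorem stmt8 {n : ℕ} (X : ℕ → Fin n → Set (EuclideanSpace ℝ (Fin n)))
    (C : Set (EuclideanSpace ℝ (Fin n))) (hCne : C.Nonempty)
    (hXne : ∀ t i, (X t i).Nonempty) (hXcl : ∀ t i, IsClosed (X t i))
    (hXcv : ∀ t i, Convex ℝ (X t i)) (hCX : ∀ t i, C ⊆ X t i)
    (A : ℕ → Matrix (Fin n) (Fin n) ℝ)
    (hnonneg : ∀ t i j, 0 ≤ A t i j)
    (hrow : ∀ t i, ∑ j, A t i j = 1)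
    (hcol : ∀ t j, ∑ i, A t i j = 1)
    (x : ℕ → Fin n → EuclideanSpace ℝ (Fin n))
    (w : ℕ → Fin n → EuclideanSpace ℝ (Fin n))
    (hw : ∀ t i, w t i = ∑ j, A t i j • x t j)
    (hproj : ∀ t i, x (t + 1) i ∈ X t i ∧
      ∀ y ∈ X t i, ‖w t i - x (t + 1) i‖ ≤ ‖w t i - y‖)
    (e : ℕ → Fin n → EuclideanSpace ℝ (Fin n))
    (he : ∀ t i, e t i = x (t + 1) i - w t i)
    (z : EuclideanSpace ℝ (Fin n)) (hz : z ∈ C) (t : ℕ) :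
    ∑ i, ‖x (t + 1) i - z‖ ^ 2 ≤
      ∑ i, ‖x t i - z‖ ^ 2 - ∑ i, ‖e t i‖ ^ 2 :=
  stmt8_general X C hXcv hCX A hnonneg hrow hcol x w hw hproj e he z hz t
end

section
/- Under the iteration x^i(t+1) = P_{X_i(t)}[Σ_j a_{ij}(t) x^j(t)] where each X_i(t) is a nonempty closed convex set containing a common nonempty set C and each A(t) is doubly stochastic, the sequence {Σ_{i=1}^n ‖x^i(t) − x‖²} is nonincreasing (hence convergent) for every x ∈ C, and moreover Σ_{t=0}^∞ Σ_{i=1}^n ‖e^i(t)‖² ≤ Σ_{i=1}^n ‖x^i(0) − x‖², where e^i(t) = x^i(t+1) − Σ_j a_{ij}(t) x^j(t). In particular e^i(t) → 0 for every i. -/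
open Filter

open RealInnerProductSpace in
/-- Projection step inequality. -/
lemma proj_sq_ineq {E : Type*} [NormedAddCommGroup E] [InnerProductSpace ℝ E]
    {K : Set E} (hK : Convex ℝ K) {u p zz : E} (hp : p ∈ K) (hzz : zz ∈ K)
    (hmin : ∀ y ∈ K, ‖u - p‖ ≤ ‖u - y‖) :
    ‖p - zz‖ ^ 2 + ‖u - p‖ ^ 2 ≤ ‖u - zz‖ ^ 2 := by
  have hinf : ‖u - p‖ = ⨅ y : K, ‖u - y‖ := by
    haveI : Nonempty K := ⟨⟨p, hp⟩⟩
    refine le_antisymm (le_ciInf fun y => hmin y y.2) ?_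
    exact ciInf_le ⟨0, fun _ ⟨_, h⟩ => h ▸ norm_nonneg _⟩ (⟨p, hp⟩ : K)
  have hang : ⟪u - p, zz - p⟫ ≤ 0 :=
    ((norm_eq_iInf_iff_real_inner_le_zero hK hp).1 hinf) zz hzz
  have hexp : ‖u - zz‖ ^ 2 = ‖u - p‖ ^ 2 + 2 * ⟪u - p, p - zz⟫ + ‖p - zz‖ ^ 2 := by
    have := norm_add_sq_real (u - p) (p - zz)
    rw [show u - p + (p - zz) = u - zz by abel] at this
    linarith [this]
  have : ⟪u - p, p - zz⟫ = -⟪u - p, zz - p⟫ := by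
    rw [show p - zz = -(zz - p) by abel, inner_neg_right]
  linarith [hexp, hang, this ▸ neg_nonneg.2 hang]

/-- For the projection-based bargaining protocol, the sequence
`∑ᵢ ‖xⁱ(t) − z‖²` is nonincreasing (hence convergent) for every `z ∈ C`, the
sum of squared errors is bounded by `∑ᵢ ‖xⁱ(0) − z‖²`, and the errors
`eⁱ(t)` tend to `0`. -/
theorem stmt9 {n : ℕ} (X : ℕ → Fin n → Set (EuclideanSpace ℝ (Fin n)))
    (C : Set (EuclideanSpace ℝ (Fin n))) (hCne : C.Nonempty)
    (hXne : ∀ t i, (X t i).Nonempty) (hXcl : ∀ t i, IsClosed (X t i))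
    (hXcv : ∀ t i, Convex ℝ (X t i)) (hCX : ∀ t i, C ⊆ X t i)
    (A : ℕ → Matrix (Fin n) (Fin n) ℝ)
    (hnonneg : ∀ t i j, 0 ≤ A t i j)
    (hrow : ∀ t i, ∑ j, A t i j = 1)
    (hcol : ∀ t j, ∑ i, A t i j = 1)
    (x : ℕ → Fin n → EuclideanSpace ℝ (Fin n))
    (w : ℕ → Fin n → EuclideanSpace ℝ (Fin n))
    (hw : ∀ t i, w t i = ∑ j, A t i j • x t j)
    (hproj : ∀ t i, x (t + 1) i ∈ X t i ∧
      ∀ y ∈ X t i, ‖w t i - x (t + 1) i‖ ≤ ‖w t i - y‖)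
    (e : ℕ → Fin n → EuclideanSpace ℝ (Fin n))
    (he : ∀ t i, e t i = x (t + 1) i - w t i)
    (z : EuclideanSpace ℝ (Fin n)) (hz : z ∈ C) :
    (Antitone fun t => ∑ i, ‖x t i - z‖ ^ 2) ∧
    (∃ l : ℝ, Tendsto (fun t => ∑ i, ‖x t i - z‖ ^ 2) atTop (nhds l)) ∧
    (∀ T : ℕ, ∑ t ∈ Finset.range T, ∑ i, ‖e t i‖ ^ 2 ≤ ∑ i, ‖x 0 i - z‖ ^ 2) ∧
    (∀ i, Tendsto (fun t => e t i) atTop (nhds 0)) := by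
  set S : ℕ → ℝ := fun t => ∑ i, ‖x t i - z‖ ^ 2 with hS
  set E : ℕ → ℝ := fun t => ∑ i, ‖e t i‖ ^ 2 with hE
  -- step 1 : per-agent projection inequality
  have step1 : ∀ t i, ‖x (t + 1) i - z‖ ^ 2 + ‖e t i‖ ^ 2 ≤ ‖w t i - z‖ ^ 2 := by
    intro t i
    have hzX : z ∈ X t i := hCX t i hz
    have := proj_sq_ineq (hXcv t i) (hproj t i).1 hzX (hproj t i).2
    have hnorm : ‖e t i‖ = ‖w t i - x (t + 1) i‖ := by
      rw [he t i, norm_sub_rev]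
    rw [hnorm]; exact this
  -- step 2 : averaging inequality
  have step2 : ∀ t, ∑ i, ‖w t i - z‖ ^ 2 ≤ S t := by
    intro t
    have key : ∀ i, ‖w t i - z‖ ^ 2 ≤ ∑ j, A t i j * ‖x t j - z‖ ^ 2 := by
      intro i
      have h1 : ‖w t i - z‖ ≤ ∑ j, A t i j * ‖x t j - z‖ := by
        have hz1 : ∑ j, A t i j • z = z := by
          rw [← Finset.sum_smul, hrow t i, one_smul]
        have hwz : w t i - z = ∑ j, A t i j • (x t j - z) := by
          rw [hw t i]
          conv_lhs => rw [← hz1]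
          rw [← Finset.sum_sub_distrib]
          simp [smul_sub]
        rw [hwz]
        calc ‖∑ j, A t i j • (x t j - z)‖ ≤ ∑ j, ‖A t i j • (x t j - z)‖ :=
              norm_sum_le _ _
          _ = ∑ j, A t i j * ‖x t j - z‖ := by
              simp [norm_smul, abs_of_nonneg (hnonneg t i _)]
      have h2 : (∑ j, A t i j * ‖x t j - z‖) ^ 2 ≤ ∑ j, A t i j * ‖x t j - z‖ ^ 2 := by
        have := (Even.convexOn_pow (𝕜 := ℝ) even_two).map_sum_le
          (t := Finset.univ) (w := fun j => A t i j) (p := fun j => ‖x t j - z‖)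
          (fun j _ => hnonneg t i j) (hrow t i) (fun j _ => Set.mem_univ _)
        simpa [smul_eq_mul] using this
      calc ‖w t i - z‖ ^ 2 ≤ (∑ j, A t i j * ‖x t j - z‖) ^ 2 := by
            apply pow_le_pow_left₀ (norm_nonneg _) h1
        _ ≤ _ := h2
    calc ∑ i, ‖w t i - z‖ ^ 2 ≤ ∑ i, ∑ j, A t i j * ‖x t j - z‖ ^ 2 :=
          Finset.sum_le_sum fun i _ => key i
      _ = ∑ j, (∑ i, A t i j) * ‖x t j - z‖ ^ 2 := by
          rw [Finset.sum_comm]; simp [Finset.sum_mul]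
      _ = S t := by simp [hcol t, hS]
  -- combined decrease
  have key : ∀ t, S (t + 1) + E t ≤ S t := by
    intro t
    calc S (t + 1) + E t = ∑ i, (‖x (t + 1) i - z‖ ^ 2 + ‖e t i‖ ^ 2) := by
          rw [hS, hE]; rw [Finset.sum_add_distrib]
      _ ≤ ∑ i, ‖w t i - z‖ ^ 2 := Finset.sum_le_sum fun i _ => step1 t i
      _ ≤ S t := step2 t
  have hEnn : ∀ t, 0 ≤ E t := fun t =>
    Finset.sum_nonneg fun i _ => sq_nonneg _
  have hSnn : ∀ t, 0 ≤ S t := fun t =>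
    Finset.sum_nonneg fun i _ => sq_nonneg _
  have hanti : Antitone S := by
    apply antitone_nat_of_succ_le
    intro t
    linarith [key t, hEnn t]
  refine ⟨hanti, ?_, ?_, ?_⟩
  · exact ⟨⨅ t, S t, tendsto_atTop_ciInf hanti ⟨0, fun _ ⟨t, h⟩ => h ▸ hSnn t⟩⟩
  · intro T
    have htel : ∀ T, ∑ t ∈ Finset.range T, E t ≤ S 0 - S T := by
      intro T
      induction T with
      | zero => simp
      | succ T ih =>
        rw [Finset.sum_range_succ]
        linarith [key T]
    linarith [htel T, hSnn T]
  · intro i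
    have hsumE : Summable E := by
      apply summable_of_sum_range_le hEnn
      intro T
      have htel : ∀ T, ∑ t ∈ Finset.range T, E t ≤ S 0 - S T := by
        intro T
        induction T with
        | zero => simp
        | succ T ih =>
          rw [Finset.sum_range_succ]
          linarith [key T]
      linarith [htel T, hSnn T]
    have hE0 : Tendsto E atTop (nhds 0) := hsumE.tendsto_atTop_zero
    have hsq : Tendsto (fun t => ‖e t i‖ ^ 2) atTop (nhds 0) := by
      apply squeeze_zero (fun t => sq_nonneg _) (fun t => ?_) hE0
      exact Finset.single_le_sum (f := fun j => ‖e t j‖ ^ 2)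
        (fun j _ => sq_nonneg _) (Finset.mem_univ i)
    have hnrm : Tendsto (fun t => ‖e t i‖) atTop (nhds 0) := by
      have := (Real.continuous_sqrt.tendsto 0).comp hsq
      simpa [Function.comp_def, Real.sqrt_sq, norm_nonneg] using this
    exact tendsto_zero_iff_norm_tendsto_zero.2 hnrm
end
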